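/- arXiv:1911.10537 — 5 statements merged into one kernel-verified Lean document; each statement's English description precedes it below -/
import Mathlib

section
/- Let A be an associative unital algebra with elements s₁, s₃, d satisfying s₁² = 1, s₃² = 1, d² = δd, d s₁ d = d, d s₃ d = d, s₁ s₃ = s₃ s₁, d s₃ s₁ d s₁ = d s₃ s₁ d s₃, and s₁ d s₃ s₁ d = s₃ d s₃ s₁ d, where δ is a scalar with δ ≠ 0 and δ ≠ 1. Then the element E = (1/(2δ(δ-1)))·(1-s₁)·d s₁ s₃ d·(1-s₁) is an idempotent: E² = E. -/
/-!
Write `D = d s₁ s₃ d` and `P = 1 - s₁`. The mixed relation says `D s₁ = D s₃`, so `D` absorbs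
`s₁ s₃` on the right; together with `d² = δ d` and `d s₃ d = d` this gives `D² = δ² D` and
`D s₁ D = δ D`, i.e. `D P D = δ(δ - 1) D`. Since `P² = 2P`, the element `P D P` squares to
`2δ(δ - 1) P D P`, and rescaling gives an idempotent.
-/

theorem isIdempotentElem_inv_smul_of_mul_self_eq_smul {K A : Type*} [Field K] [Ring A]
    [Algebra K A] {c : K} {x : A} (h : x * x = c • x) : IsIdempotentElem (c⁻¹ • x) := by
  rw [IsIdempotentElem, smul_mul_smul_comm, h, smul_smul, mul_right_comm]
  simpa using congrArg (· • x) (mul_inv_mul_cancel c⁻¹)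

section Sandwich

variable {R A : Type*} [CommSemiring R] [Semiring A] [Algebra R A]

theorem mul_self_sandwich_eq_smul {P D : A} {a b : R} (hP : P * P = a • P)
    (hD : D * P * D = b • D) : (P * D * P) * (P * D * P) = (a * b) • (P * D * P) := calc
  (P * D * P) * (P * D * P) = P * (D * (P * P) * D) * P := by simp only [mul_assoc]
  _ = (a * b) • (P * D * P) := by
    rw [hP, mul_smul_comm, smul_mul_assoc, hD]
    simp only [mul_smul_comm, smul_mul_assoc, smul_smul]

end Sandwich

theorem one_sub_mul_self_of_mul_self_eq_one {R A : Type*} [CommRing R] [Ring A] [Algebra R A]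
    {s : A} (h : s * s = 1) : (1 - s) * (1 - s) = (2 : R) • (1 - s) := by
  simp only [sub_mul, mul_sub, one_mul, mul_one, h, two_smul]
  abel

section WalledBrauer

variable {R A : Type*} [CommRing R] [Ring A] [Algebra R A] {s₁ s₃ d : A} {δ : R}

theorem contraction_mul_s₁_eq_mul_s₃ (hcomm : s₁ * s₃ = s₃ * s₁)
    (hmix1 : d * s₃ * s₁ * d * s₁ = d * s₃ * s₁ * d * s₃) :
    d * s₁ * s₃ * d * s₁ = d * s₁ * s₃ * d * s₃ := by
  simpa only [mul_assoc, hcomm] using hmix1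

theorem contraction_mul_s₁_mul_s₃ (h3 : s₃ * s₃ = 1) (hcomm : s₁ * s₃ = s₃ * s₁)
    (hmix1 : d * s₃ * s₁ * d * s₁ = d * s₃ * s₁ * d * s₃) :
    d * s₁ * s₃ * d * s₁ * s₃ = d * s₁ * s₃ * d := by
  rw [contraction_mul_s₁_eq_mul_s₃ hcomm hmix1, mul_assoc _ s₃ s₃, h3, mul_one]

theorem contraction_mul_s₁_s₃_mul_d (h3 : s₃ * s₃ = 1) (hd : d * d = δ • d)
    (hcomm : s₁ * s₃ = s₃ * s₁) (hmix1 : d * s₃ * s₁ * d * s₁ = d * s₃ * s₁ * d * s₃) :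
    d * s₁ * s₃ * d * s₁ * s₃ * d = δ • (d * s₁ * s₃ * d) := by
  rw [contraction_mul_s₁_mul_s₃ h3 hcomm hmix1, mul_assoc, hd, mul_smul_comm]

theorem contraction_mul_self (h3 : s₃ * s₃ = 1) (hd : d * d = δ • d)
    (hcomm : s₁ * s₃ = s₃ * s₁) (hmix1 : d * s₃ * s₁ * d * s₁ = d * s₃ * s₁ * d * s₃) :
    (d * s₁ * s₃ * d) * (d * s₁ * s₃ * d) = (δ * δ) • (d * s₁ * s₃ * d) := by
  have : (d * s₁ * s₃ * d) * (d * s₁ * s₃ * d) = δ • (d * s₁ * s₃ * d * s₁ * s₃ * d) := by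
    simp only [← mul_assoc]
    rw [mul_assoc (d * s₁ * s₃) d d, hd, mul_smul_comm]
    simp only [smul_mul_assoc]
  rw [this, contraction_mul_s₁_s₃_mul_d h3 hd hcomm hmix1, smul_smul]

theorem contraction_mul_s₁_mul_self (h3 : s₃ * s₃ = 1) (hd : d * d = δ • d)
    (hds3d : d * s₃ * d = d) (hcomm : s₁ * s₃ = s₃ * s₁)
    (hmix1 : d * s₃ * s₁ * d * s₁ = d * s₃ * s₁ * d * s₃) :
    (d * s₁ * s₃ * d) * s₁ * (d * s₁ * s₃ * d) = δ • (d * s₁ * s₃ * d) := by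
  rw [contraction_mul_s₁_eq_mul_s₃ hcomm hmix1, ← contraction_mul_s₁_s₃_mul_d h3 hd hcomm hmix1]
  simp only [← mul_assoc]
  rw [mul_assoc (d * s₁ * s₃) d s₃, mul_assoc (d * s₁ * s₃) _ d, hds3d]

end WalledBrauer

theorem fusion_idempotent_B22_general {A : Type*} [Ring A] [Algebra ℂ A]
    (s₁ s₃ d : A) (δ : ℂ)
    (h1 : s₁ * s₁ = 1) (h3 : s₃ * s₃ = 1) (hd : d * d = δ • d)
    (hds3d : d * s₃ * d = d)
    (hcomm : s₁ * s₃ = s₃ * s₁)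
    (hmix1 : d * s₃ * s₁ * d * s₁ = d * s₃ * s₁ * d * s₃) :
    ((2 * δ * (δ - 1))⁻¹ • ((1 - s₁) * (d * s₁ * s₃ * d) * (1 - s₁))) *
      ((2 * δ * (δ - 1))⁻¹ • ((1 - s₁) * (d * s₁ * s₃ * d) * (1 - s₁))) =
      (2 * δ * (δ - 1))⁻¹ • ((1 - s₁) * (d * s₁ * s₃ * d) * (1 - s₁)) := by
  have hmiddle : (d * s₁ * s₃ * d) * (1 - s₁) * (d * s₁ * s₃ * d) =
      (δ * (δ - 1)) • (d * s₁ * s₃ * d) := by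
    rw [mul_sub, mul_one, sub_mul, contraction_mul_self h3 hd hcomm hmix1,
      contraction_mul_s₁_mul_self h3 hd hds3d hcomm hmix1, ← sub_smul, mul_sub, mul_one]
  have hsquare := mul_self_sandwich_eq_smul (one_sub_mul_self_of_mul_self_eq_one h1) hmiddle
  rw [← mul_assoc (2 : ℂ)] at hsquare
  exact isIdempotentElem_inv_smul_of_mul_self_eq_smul hsquare

/-- In an associative unital ℂ-algebra with elements s₁, s₃, d
satisfying the walled Brauer relations of B_{2,2}(δ), with δ ≠ 0, δ ≠ 1,
the element E = (1/(2δ(δ-1)))·(1-s₁)·d s₁ s₃ d·(1-s₁) is an idempotent. -/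
theorem fusion_idempotent_B22 {A : Type*} [Ring A] [Algebra ℂ A]
    (s₁ s₃ d : A) (δ : ℂ) (hδ0 : δ ≠ 0) (hδ1 : δ ≠ 1)
    (h1 : s₁ * s₁ = 1) (h3 : s₃ * s₃ = 1) (hd : d * d = δ • d)
    (hds1d : d * s₁ * d = d) (hds3d : d * s₃ * d = d)
    (hcomm : s₁ * s₃ = s₃ * s₁)
    (hmix1 : d * s₃ * s₁ * d * s₁ = d * s₃ * s₁ * d * s₃)
    (hmix2 : s₁ * d * s₃ * s₁ * d = s₃ * d * s₃ * s₁ * d) :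
    ((2 * δ * (δ - 1))⁻¹ • ((1 - s₁) * (d * s₁ * s₃ * d) * (1 - s₁))) *
      ((2 * δ * (δ - 1))⁻¹ • ((1 - s₁) * (d * s₁ * s₃ * d) * (1 - s₁))) =
      (2 * δ * (δ - 1))⁻¹ • ((1 - s₁) * (d * s₁ * s₃ * d) * (1 - s₁)) :=
  fusion_idempotent_B22_general s₁ s₃ d δ h1 h3 hd hds3d hcomm hmix1
end

section
/- Let A be an associative unital algebra with elements d₁, d₂, s satisfying: s² = 1, s d₁ s = d₂, d₁ d₂ = d₁ s, d₂ d₁ = d₂ s. Define d₁(u) := 1 - d₁/u, d₂(u) := 1 - d₂/u, s(u) := 1 - s/u. Then for all scalars u, v with u, v, u-v ≠ 0: d₁(u)·d₂(u-v)·s(v) = s(v)·d₂(u-v)·d₁(u). -/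
/-!
Expanding both triple products, the relations reduce every quadratic and cubic monomial to
one of `d₁ * s`, `d₂ * s`, `d₁`; the two sides then differ by
`(a * b + a * c - b * c) • (d₁ * s - d₂ * s)`, and for `a = u⁻¹`, `b = (u - v)⁻¹`, `c = v⁻¹`
the scalar vanishes because `v + (u - v) = u`.
-/

section WalledBrauer

variable {R A : Type*} [CommRing R] [Ring A] [Algebra R A]

theorem one_sub_smul_mul_one_sub_smul_mul_one_sub_smul (a b c : R) (x y z : A) :
    (1 - a • x) * (1 - b • y) * (1 - c • z) =
      1 - a • x - b • y - c • z + (a * b) • (x * y) + (a * c) • (x * z) + (b * c) • (y * z)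
        - (a * b * c) • (x * y * z) := by
  simp only [mul_sub, sub_mul, one_mul, mul_one, smul_mul_assoc, mul_smul_comm, mul_assoc]
  module

theorem mul_eq_conj_mul_of_mul_self_eq_one {s : A} (hs : s * s = 1) (x : A) :
    s * x = s * x * s * s := by
  rw [mul_assoc _ s s, hs, mul_one]

theorem mul_conj_eq_mul_of_mul_self_eq_one {s : A} (hs : s * s = 1) (x : A) :
    s * (s * x * s) = x * s := by
  rw [← mul_assoc, ← mul_assoc, hs, one_mul]

variable {d₁ d₂ s : A}

theorem baxterized_mul_mul_eq_reverse (a b c : R) (habc : a * b + a * c = b * c)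
    (hs : s * s = 1) (hsd : s * d₁ * s = d₂) (h12 : d₁ * d₂ = d₁ * s) (h21 : d₂ * d₁ = d₂ * s) :
    (1 - a • d₁) * (1 - b • d₂) * (1 - c • s) = (1 - c • s) * (1 - b • d₂) * (1 - a • d₁) := by
  have hsd₁ : s * d₁ = d₂ * s := by rw [mul_eq_conj_mul_of_mul_self_eq_one hs, hsd]
  have hsd₂ : s * d₂ = d₁ * s := by rw [← hsd, mul_conj_eq_mul_of_mul_self_eq_one hs]
  have h12s : d₁ * d₂ * s = d₁ := by rw [h12, mul_assoc, hs, mul_one]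
  have hs21 : s * d₂ * d₁ = d₁ := by rw [hsd₂, mul_assoc, hsd₁, ← mul_assoc, h12s]
  rw [one_sub_smul_mul_one_sub_smul_mul_one_sub_smul,
    one_sub_smul_mul_one_sub_smul_mul_one_sub_smul, h12s, hs21, h12, h21, hsd₁, hsd₂]
  linear_combination (norm := module) habc • (d₁ * s) - habc • (d₂ * s)

end WalledBrauer

/-- mixed Yang–Baxter equation (ybsp3) for the walled Brauer algebra:
with s² = 1, s d₁ s = d₂, d₁ d₂ = d₁ s, d₂ d₁ = d₂ s, and the baxterized elements
d₁(u) = 1 - d₁/u, d₂(u) = 1 - d₂/u, s(u) = 1 - s/u, one has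
d₁(u)·d₂(u-v)·s(v) = s(v)·d₂(u-v)·d₁(u). -/
theorem mixed_yang_baxter_ybsp3 {A : Type*} [Ring A] [Algebra ℂ A]
    (d₁ d₂ s : A) (hs : s * s = 1) (hsd : s * d₁ * s = d₂)
    (h12 : d₁ * d₂ = d₁ * s) (h21 : d₂ * d₁ = d₂ * s) :
    ∀ u v : ℂ, u ≠ 0 → v ≠ 0 → u - v ≠ 0 →
      ((1 : A) - u⁻¹ • d₁) * ((1 : A) - (u - v)⁻¹ • d₂) * ((1 : A) - v⁻¹ • s) =
      ((1 : A) - v⁻¹ • s) * ((1 : A) - (u - v)⁻¹ • d₂) * ((1 : A) - u⁻¹ • d₁) := by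
  intro u v hu hv huv
  refine baxterized_mul_mul_eq_reverse _ _ _ ?_ hs hsd h12 h21
  field_simp
  ring
end

section
/- Let A be an associative unital algebra over ℂ with elements d₁, d₂, s and a scalar δ satisfying: s² = 1, s d₁ s = d₂, d₁² = δ d₁, d₂² = δ d₂, d₁ s d₁ = d₁, d₂ s d₂ = d₂, d₁ d₂ = d₁ s, d₂ d₁ = d₂ s. Define d₁(u) := 1 - d₁/u, d₂(v) := 1 - d₂/v, s(w) := 1 - s/w. Then for all scalars u, v with u, v, δ-u-v ≠ 0: d₁(u)·s(δ-u-v)·d₂(v) = d₂(v)·s(δ-u-v)·d₁(u). -/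
/-!
After the relations are used, every quadratic and cubic term of the expanded product
`(1 - u⁻¹ d₁)(1 - w⁻¹ s)(1 - v⁻¹ d₂)`, `w = δ - u - v`, is a multiple of `d₁ s`, with total
coefficient `u⁻¹w⁻¹ + u⁻¹v⁻¹ + w⁻¹v⁻¹ - δ u⁻¹w⁻¹v⁻¹`, which vanishes because `u + w + v = δ`.
Symmetrically on the other side with `d₂ s`, so both sides equal `1 - u⁻¹ d₁ - w⁻¹ s - v⁻¹ d₂`.
-/

theorem inv_mul_inv_add_inv_mul_inv_add_inv_mul_inv {K : Type*} [Field K] {x y z : K}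
    (hx : x ≠ 0) (hy : y ≠ 0) (hz : z ≠ 0) :
    x⁻¹ * y⁻¹ + x⁻¹ * z⁻¹ + y⁻¹ * z⁻¹ = (x + y + z) * (x⁻¹ * y⁻¹ * z⁻¹) := by
  field_simp
  ring

section TripleProduct

variable {R A : Type*} [CommRing R] [Ring A] [Algebra R A]

theorem one_sub_smul_mul_one_sub_smul_mul_one_sub_smul_s7 {p q r : A} {δ a b c : R}
    (hp : p * p = δ • p) (hpr : p * r = p * q) (hqr : q * r = p * q)
    (habc : a * b + a * c + b * c = δ * (a * b * c)) :
    (1 - a • p) * (1 - b • q) * (1 - c • r) = 1 - a • p - b • q - c • r := by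
  have hpqr : p * q * r = δ • (p * q) := by
    rw [mul_assoc, hqr, ← mul_assoc, hp, smul_mul_assoc]
  calc (1 - a • p) * (1 - b • q) * (1 - c • r)
      = 1 - a • p - b • q - c • r + (a * b + a * c + b * c - δ * (a * b * c)) • (p * q) := by
        simp only [sub_mul, mul_sub, one_mul, mul_one, smul_mul_smul_comm, hpr, hqr, hpqr]
        module
    _ = 1 - a • p - b • q - c • r := by rw [habc, sub_self, zero_smul, add_zero]

end TripleProduct

theorem mixed_yang_baxter_ybsp5_general {A : Type*} [Ring A] [Algebra ℂ A]
    (d₁ d₂ s : A) (δ : ℂ) (hs : s * s = 1) (hsd : s * d₁ * s = d₂)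
    (hd1 : d₁ * d₁ = δ • d₁) (hd2 : d₂ * d₂ = δ • d₂)
    (h12 : d₁ * d₂ = d₁ * s) (h21 : d₂ * d₁ = d₂ * s) :
    ∀ u v : ℂ, u ≠ 0 → v ≠ 0 → δ - u - v ≠ 0 →
      ((1 : A) - u⁻¹ • d₁) * ((1 : A) - (δ - u - v)⁻¹ • s) * ((1 : A) - v⁻¹ • d₂) =
      ((1 : A) - v⁻¹ • d₂) * ((1 : A) - (δ - u - v)⁻¹ • s) * ((1 : A) - u⁻¹ • d₁) := by
  intro u v hu hv hw
  have hsd₁ : s * d₁ = d₂ * s := by rw [← hsd, mul_assoc (s * d₁), hs, mul_one]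
  have hsd₂ : s * d₂ = d₁ * s := by rw [← hsd, ← mul_assoc, ← mul_assoc, hs, one_mul]
  have hleft := inv_mul_inv_add_inv_mul_inv_add_inv_mul_inv hu hw hv
  have hright := inv_mul_inv_add_inv_mul_inv_add_inv_mul_inv hv hw hu
  rw [show u + (δ - u - v) + v = δ by ring] at hleft
  rw [show v + (δ - u - v) + u = δ by ring] at hright
  rw [one_sub_smul_mul_one_sub_smul_mul_one_sub_smul_s7 hd1 h12 hsd₂ hleft,
    one_sub_smul_mul_one_sub_smul_mul_one_sub_smul_s7 hd2 h21 hsd₁ hright]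
  abel

/-- mixed Yang–Baxter equation (ybsp5) for the walled Brauer algebra:
d₁(u)·s(δ-u-v)·d₂(v) = d₂(v)·s(δ-u-v)·d₁(u). -/
theorem mixed_yang_baxter_ybsp5 {A : Type*} [Ring A] [Algebra ℂ A]
    (d₁ d₂ s : A) (δ : ℂ) (hs : s * s = 1) (hsd : s * d₁ * s = d₂)
    (hd1 : d₁ * d₁ = δ • d₁) (hd2 : d₂ * d₂ = δ • d₂)
    (hd1s : d₁ * s * d₁ = d₁) (hd2s : d₂ * s * d₂ = d₂)
    (h12 : d₁ * d₂ = d₁ * s) (h21 : d₂ * d₁ = d₂ * s) :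
    ∀ u v : ℂ, u ≠ 0 → v ≠ 0 → δ - u - v ≠ 0 →
      ((1 : A) - u⁻¹ • d₁) * ((1 : A) - (δ - u - v)⁻¹ • s) * ((1 : A) - v⁻¹ • d₂) =
      ((1 : A) - v⁻¹ • d₂) * ((1 : A) - (δ - u - v)⁻¹ • s) * ((1 : A) - u⁻¹ • d₁) :=
  mixed_yang_baxter_ybsp5_general d₁ d₂ s δ hs hsd hd1 hd2 h12 h21
end

section
/- For each bipartition Λ = (λ_L, λ_R) with |λ_L| = r - f and |λ_R| = s - f for some 0 ≤ f ≤ min(r,s), the standard walled Λ-tableaux of length r+s are in bijection with sequences of contents (c₁,…,c_{r+s}) ∈ ℂ^{r+s} (with δ treated as a transcendental parameter); i.e., a standard walled tableau is uniquely determined by its content sequence. -/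
/-!
Compare the two tableaux step by step. A cell can be added to, or removed from, a Young
diagram only at the end of its diagonal, so such a cell is determined by its content `j - i`.
Since `δ` is not an integer, a step adding to the second diagram (content in `ℤ + δ`) is never
confused with one removing from the first (content in `ℤ`), while in the first `r` steps only
cells are added to the first diagram.
-/

open scoped BigOperators

/-- A standard walled Λ-tableau of length r+s: a path in the Bratteli diagram,
i.e. a sequence of bipartitions starting at (∅,∅), adding a box to the first
diagram at each of the first r steps, then adding a box to the second diagram or
removing a box from the first diagram at each of the remaining s steps,
ending at Λ (and stationary afterwards). -/
structure WalledTableau (r s : ℕ) (Λ : YoungDiagram × YoungDiagram) where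
  seq : ℕ → YoungDiagram × YoungDiagram
  init : seq 0 = (⊥, ⊥)
  final : seq (r + s) = Λ
  stable : ∀ t, r + s ≤ t → seq t = seq (r + s)
  left : ∀ t, 1 ≤ t → t ≤ r →
    (seq t).2 = (seq (t - 1)).2 ∧
    ∃ c, c ∉ (seq (t - 1)).1 ∧ (seq t).1.cells = insert c (seq (t - 1)).1.cells
  right : ∀ t, r < t → t ≤ r + s →
    ((seq t).1 = (seq (t - 1)).1 ∧
      ∃ c, c ∉ (seq (t - 1)).2 ∧ (seq t).2.cells = insert c (seq (t - 1)).2.cells) ∨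
    ((seq t).2 = (seq (t - 1)).2 ∧
      ∃ c, c ∈ (seq (t - 1)).1 ∧ (seq t).1.cells = (seq (t - 1)).1.cells.erase c)

/-- The content of the step from the bipartition `A` to the bipartition `B`
(which differ by exactly one cell): j - i for a cell (i,j) added to the first
diagram, -(j - i) for a cell removed from the first diagram, and (j - i) + δ for
a cell added to the second diagram. -/
noncomputable def stepContent (δ : ℂ) (A B : YoungDiagram × YoungDiagram) : ℂ :=
  (∑ c ∈ B.1.cells \ A.1.cells, ((c.2 : ℂ) - (c.1 : ℂ))) +
  (∑ c ∈ A.1.cells \ B.1.cells, ((c.1 : ℂ) - (c.2 : ℂ))) +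
  (∑ c ∈ B.2.cells \ A.2.cells, ((c.2 : ℂ) - (c.1 : ℂ) + δ))

def cellContent (c : ℕ × ℕ) : ℤ := c.2 - c.1

namespace YoungDiagram

theorem mem_of_cellContent_eq {μ : YoungDiagram} {c d : ℕ × ℕ} (hd : d ∈ μ)
    (hcd : cellContent c = cellContent d) (h : c.1 ≤ d.1) : c ∈ μ := by
  unfold cellContent at hcd
  exact μ.up_left_mem h (by omega) hd

theorem eq_of_insert_cells_of_cellContent_eq {lam μ ν : YoungDiagram} {c d : ℕ × ℕ}
    (hc : c ∉ lam) (hd : d ∉ lam) (hμ : μ.cells = insert c lam.cells)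
    (hν : ν.cells = insert d lam.cells) (hcd : cellContent c = cellContent d) : μ = ν := by
  wlog h : c.1 ≤ d.1 generalizing μ ν c d
  · exact (this hd hc hν hμ hcd.symm (by omega)).symm
  suffices c = d from YoungDiagram.ext (by rw [hμ, hν, this])
  have hdν : d ∈ ν := by rw [← mem_cells, hν]; exact Finset.mem_insert_self d _
  have hcν : c ∈ ν.cells := mem_of_cellContent_eq hdν hcd h
  rw [hν, Finset.mem_insert] at hcν
  exact hcν.resolve_right hc

theorem eq_of_erase_cells_of_cellContent_eq {lam μ ν : YoungDiagram} {c d : ℕ × ℕ}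
    (hc : c ∈ lam) (hd : d ∈ lam) (hμ : μ.cells = lam.cells.erase c)
    (hν : ν.cells = lam.cells.erase d) (hcd : cellContent c = cellContent d) : μ = ν := by
  wlog h : c.1 ≤ d.1 generalizing μ ν c d
  · exact (this hd hc hν hμ hcd.symm (by omega)).symm
  suffices c = d from YoungDiagram.ext (by rw [hμ, hν, this])
  by_contra hne
  have hdμ : d ∈ μ := by rw [← mem_cells, hμ]; exact Finset.mem_erase.2 ⟨Ne.symm hne, hd⟩
  have hcμ : c ∈ μ.cells := mem_of_cellContent_eq hdμ hcd h
  rw [hμ] at hcμ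
  exact Finset.notMem_erase c _ hcμ

end YoungDiagram

section StepContent

variable {δ : ℂ} {A B : YoungDiagram × YoungDiagram} {c : ℕ × ℕ}

theorem stepContent_of_addLeft (hc : c ∉ A.1) (h₁ : B.1.cells = insert c A.1.cells)
    (h₂ : B.2 = A.2) : stepContent δ A B = cellContent c := by
  simp [stepContent, h₁, h₂, Finset.insert_sdiff_of_notMem _ hc, cellContent,
    Finset.sdiff_eq_empty_iff_subset.2 (Finset.subset_insert c A.1.cells)]

theorem stepContent_of_addRight (hc : c ∉ A.2) (h₁ : B.1 = A.1)
    (h₂ : B.2.cells = insert c A.2.cells) : stepContent δ A B = cellContent c + δ := by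
  simp [stepContent, h₁, h₂, Finset.insert_sdiff_of_notMem _ hc, cellContent]

theorem stepContent_of_removeLeft (hc : c ∈ A.1) (h₁ : B.1.cells = A.1.cells.erase c)
    (h₂ : B.2 = A.2) : stepContent δ A B = -cellContent c := by
  simp [stepContent, h₁, h₂, Finset.sdiff_erase_self hc, cellContent,
    Finset.sdiff_eq_empty_iff_subset.2 (Finset.erase_subset c A.1.cells)]

end StepContent

section Steps

def AddsLeft (A B : YoungDiagram × YoungDiagram) : Prop :=
  B.2 = A.2 ∧ ∃ c, c ∉ A.1 ∧ B.1.cells = insert c A.1.cells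

def AddsRight (A B : YoungDiagram × YoungDiagram) : Prop :=
  B.1 = A.1 ∧ ∃ c, c ∉ A.2 ∧ B.2.cells = insert c A.2.cells

def RemovesLeft (A B : YoungDiagram × YoungDiagram) : Prop :=
  B.2 = A.2 ∧ ∃ c, c ∈ A.1 ∧ B.1.cells = A.1.cells.erase c

variable {δ : ℂ} {A A' B₁ B₂ : YoungDiagram × YoungDiagram}

theorem AddsLeft.eq_of_stepContent_eq (h₁ : AddsLeft A B₁) (h₂ : AddsLeft A B₂)
    (h : stepContent δ A B₁ = stepContent δ A B₂) : B₁ = B₂ := by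
  obtain ⟨hB₁, c₁, hc₁, hcells₁⟩ := h₁
  obtain ⟨hB₂, c₂, hc₂, hcells₂⟩ := h₂
  rw [stepContent_of_addLeft hc₁ hcells₁ hB₁, stepContent_of_addLeft hc₂ hcells₂ hB₂] at h
  exact Prod.ext (YoungDiagram.eq_of_insert_cells_of_cellContent_eq hc₁ hc₂ hcells₁ hcells₂
    (by exact_mod_cast h)) (hB₁.trans hB₂.symm)

theorem AddsRight.eq_of_stepContent_eq (h₁ : AddsRight A B₁) (h₂ : AddsRight A B₂)
    (h : stepContent δ A B₁ = stepContent δ A B₂) : B₁ = B₂ := by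
  obtain ⟨hB₁, c₁, hc₁, hcells₁⟩ := h₁
  obtain ⟨hB₂, c₂, hc₂, hcells₂⟩ := h₂
  rw [stepContent_of_addRight hc₁ hB₁ hcells₁, stepContent_of_addRight hc₂ hB₂ hcells₂,
    add_left_inj] at h
  exact Prod.ext (hB₁.trans hB₂.symm)
    (YoungDiagram.eq_of_insert_cells_of_cellContent_eq hc₁ hc₂ hcells₁ hcells₂
      (by exact_mod_cast h))

theorem RemovesLeft.eq_of_stepContent_eq (h₁ : RemovesLeft A B₁) (h₂ : RemovesLeft A B₂)
    (h : stepContent δ A B₁ = stepContent δ A B₂) : B₁ = B₂ := by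
  obtain ⟨hB₁, c₁, hc₁, hcells₁⟩ := h₁
  obtain ⟨hB₂, c₂, hc₂, hcells₂⟩ := h₂
  rw [stepContent_of_removeLeft hc₁ hcells₁ hB₁, stepContent_of_removeLeft hc₂ hcells₂ hB₂,
    neg_inj] at h
  exact Prod.ext (YoungDiagram.eq_of_erase_cells_of_cellContent_eq hc₁ hc₂ hcells₁ hcells₂
    (by exact_mod_cast h)) (hB₁.trans hB₂.symm)

theorem AddsRight.stepContent_ne_of_removesLeft (hδ : ∀ n : ℤ, δ ≠ n) (h₁ : AddsRight A B₁)
    (h₂ : RemovesLeft A' B₂) : stepContent δ A B₁ ≠ stepContent δ A' B₂ := by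
  obtain ⟨hB₁, c₁, hc₁, hcells₁⟩ := h₁
  obtain ⟨hB₂, c₂, hc₂, hcells₂⟩ := h₂
  rw [stepContent_of_addRight hc₁ hB₁ hcells₁, stepContent_of_removeLeft hc₂ hcells₂ hB₂]
  intro h
  apply hδ (-cellContent c₂ - cellContent c₁)
  push_cast
  linear_combination h

theorem eq_of_stepContent_eq_of_addsRight_or_removesLeft (hδ : ∀ n : ℤ, δ ≠ n)
    (h₁ : AddsRight A B₁ ∨ RemovesLeft A B₁) (h₂ : AddsRight A B₂ ∨ RemovesLeft A B₂)
    (h : stepContent δ A B₁ = stepContent δ A B₂) : B₁ = B₂ := by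
  rcases h₁ with h₁ | h₁ <;> rcases h₂ with h₂ | h₂
  · exact h₁.eq_of_stepContent_eq h₂ h
  · exact absurd h (h₁.stepContent_ne_of_removesLeft hδ h₂)
  · exact absurd h.symm (h₂.stepContent_ne_of_removesLeft hδ h₁)
  · exact h₁.eq_of_stepContent_eq h₂ h

end Steps

namespace WalledTableau

variable {r s : ℕ} {Λ : YoungDiagram × YoungDiagram} (T : WalledTableau r s Λ) {t : ℕ}

theorem addsLeft (ht : t < r) : AddsLeft (T.seq t) (T.seq (t + 1)) :=
  T.left (t + 1) (by omega) ht

theorem addsRight_or_removesLeft (hr : r ≤ t) (ht : t < r + s) :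
    AddsRight (T.seq t) (T.seq (t + 1)) ∨ RemovesLeft (T.seq t) (T.seq (t + 1)) :=
  T.right (t + 1) (by omega) ht

end WalledTableau

/-- with δ transcendental (in particular δ differs from every integer),
a standard walled Λ-tableau is uniquely determined by its sequence of contents. -/
theorem walled_tableau_determined_by_contents
    (δ : ℂ) (hδ : ∀ n : ℤ, δ ≠ (n : ℂ))
    (r s : ℕ) (Λ : YoungDiagram × YoungDiagram)
    (T₁ T₂ : WalledTableau r s Λ)
    (h : ∀ t < r + s, stepContent δ (T₁.seq t) (T₁.seq (t + 1)) =
      stepContent δ (T₂.seq t) (T₂.seq (t + 1))) :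
    ∀ t, T₁.seq t = T₂.seq t := by
  intro t
  induction t with
  | zero => rw [T₁.init, T₂.init]
  | succ t ih =>
    rcases le_or_gt (r + s) t with hend | hlt
    · rw [T₁.stable _ (by omega), T₂.stable _ (by omega), T₁.final, T₂.final]
    have hcontent := h t hlt
    rw [← ih] at hcontent
    rcases lt_or_ge t r with hr | hr
    · have h₂ := T₂.addsLeft hr
      rw [← ih] at h₂
      exact (T₁.addsLeft hr).eq_of_stepContent_eq h₂ hcontent
    · have h₂ := T₂.addsRight_or_removesLeft hr hlt
      rw [← ih] at h₂
      exact eq_of_stepContent_eq_of_addsRight_or_removesLeft hδ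
        (T₁.addsRight_or_removesLeft hr hlt) h₂ hcontent
end

section
/- Standard walled Λ-tableaux T = (Λ⁽⁰⁾,…,Λ⁽ʳ⁺ˢ⁾) are in bijection with standard triple tableaux: triples [λ'(T), ν(T), λ''(T)] of Young diagrams with ν(T) ⊆ λ'(T), |λ'(T)| = r, where λ'(T) is filled standardly with 1,…,r, and the cells of (λ'(T)∖ν(T)) ⊔ λ''(T) are filled bijectively with r+1,…,r+s recording the order of removals from the first diagram and additions to the second, such that removals always occur at cells removable at that stage and additions at cells addable at that stage. -/
open scoped BigOperators

/-- A standard triple tableau: Young diagrams ν ⊆ λ' (with |λ'| = r) and λ'', a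
standard filling of λ' by 1,…,r, and a filling of (λ'∖ν) ⊔ λ'' by r+1,…,r+s
recording the order of removals from the first diagram and additions to the second,
such that removals always occur at cells removable at that stage and additions at
cells addable at that stage (i.e. every intermediate stage is a Young diagram). -/
structure TripleTableau (r s : ℕ) where
  lam' : YoungDiagram
  nu : YoungDiagram
  lam'' : YoungDiagram
  sub : nu ≤ lam'
  cardL : lam'.cells.card = r
  cardAfter : (lam'.cells \ nu.cells).card + lam''.cells.card = s
  fL : ℕ × ℕ → ℕ
  fSk : ℕ × ℕ → ℕ
  fR : ℕ × ℕ → ℕ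
  fL_mem : ∀ c ∈ lam'.cells, 1 ≤ fL c ∧ fL c ≤ r
  fL_inj : Set.InjOn fL ↑lam'.cells
  fL_junk : ∀ c ∉ lam'.cells, fL c = 0
  fSk_mem : ∀ c ∈ lam'.cells \ nu.cells, r + 1 ≤ fSk c ∧ fSk c ≤ r + s
  fSk_inj : Set.InjOn fSk ↑(lam'.cells \ nu.cells)
  fSk_junk : ∀ c ∉ lam'.cells \ nu.cells, fSk c = 0
  fR_mem : ∀ c ∈ lam''.cells, r + 1 ≤ fR c ∧ fR c ≤ r + s
  fR_inj : Set.InjOn fR ↑lam''.cells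
  fR_junk : ∀ c ∉ lam''.cells, fR c = 0
  disj : ∀ c ∈ lam'.cells \ nu.cells, ∀ c' ∈ lam''.cells, fSk c ≠ fR c'
  stepL : ∀ t : ℕ, ∃ μ : YoungDiagram,
    μ.cells = lam'.cells.filter (fun c => fL c ≤ t)
  stepSk : ∀ t : ℕ, ∃ μ : YoungDiagram,
    μ.cells = lam'.cells.filter (fun c => c ∈ nu.cells ∨ t < fSk c)
  stepR : ∀ t : ℕ, ∃ μ : YoungDiagram,
    μ.cells = lam''.cells.filter (fun c => fR c ≤ t)

section FirstTimes

variable {α : Type*} {S : ℕ → Finset α} {c : α} {k m t : ℕ}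

theorem Nat.sInf_eq_of_forall_le_iff {P : ℕ → Prop} (hkm : k ≤ m)
    (h : ∀ t ≤ m, P t ↔ k ≤ t) : sInf {t | P t} = k := by
  have hk : P k := (h k hkm).2 le_rfl
  refine le_antisymm (Nat.sInf_le hk) (not_lt.mp fun hlt => ?_)
  exact absurd ((h _ (hlt.le.trans hkm)).1 (Nat.sInf_mem ⟨k, hk⟩)) (not_le.mpr hlt)

theorem mem_iff_sInf_le_of_monotoneOn (hS : MonotoneOn S (Set.Iic m)) (hc : c ∈ S m)
    (ht : t ≤ m) : c ∈ S t ↔ sInf {n | c ∈ S n} ≤ t := by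
  refine ⟨fun h => Nat.sInf_le h, fun h => ?_⟩
  exact hS (h.trans ht) ht h (Nat.sInf_mem (s := {n | c ∈ S n}) ⟨m, hc⟩)

theorem exists_sInf_mem_eq_succ (h0 : c ∉ S 0) (hc : c ∈ S k) :
    ∃ n, sInf {t | c ∈ S t} = n + 1 ∧ c ∉ S n ∧ c ∈ S (n + 1) := by
  have hmem : c ∈ S (sInf {t | c ∈ S t}) := Nat.sInf_mem (s := {t | c ∈ S t}) ⟨k, hc⟩
  obtain ⟨n, hn⟩ := Nat.exists_eq_add_one.mpr (Nat.pos_of_ne_zero fun h => h0 (h ▸ hmem))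
  exact ⟨n, hn, Nat.notMem_of_lt_sInf (s := {t | c ∈ S t}) (by omega), hn ▸ hmem⟩

theorem mem_setOf_lt_notMem (hc : c ∈ S m) (hck : c ∉ S k) (hmk : m ≤ k) :
    k ∈ {n | m < n ∧ c ∉ S n} :=
  ⟨lt_of_le_of_ne hmk (by rintro rfl; exact hck hc), hck⟩

theorem exists_sInf_notMem_eq_succ (hc : c ∈ S m) (hck : c ∉ S k) (hmk : m ≤ k) :
    ∃ n ≥ m, sInf {t | m < t ∧ c ∉ S t} = n + 1 ∧ c ∈ S n ∧ c ∉ S (n + 1) := by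
  obtain ⟨hlt, hout⟩ := Nat.sInf_mem ⟨k, mem_setOf_lt_notMem hc hck hmk⟩
  obtain ⟨n, hn⟩ := Nat.exists_eq_add_one.mpr (Nat.zero_lt_of_lt hlt)
  refine ⟨n, by omega, hn, ?_, hn ▸ hout⟩
  rcases (Nat.lt_succ_iff.mp (hn ▸ hlt : m < n + 1)).eq_or_lt with rfl | hmn
  · exact hc
  · by_contra hcn
    exact absurd (Nat.sInf_le (s := {t | m < t ∧ c ∉ S t}) ⟨hmn, hcn⟩) (by omega)

theorem mem_iff_lt_sInf_of_antitoneOn (hS : AntitoneOn S (Set.Ici m)) (hc : c ∈ S m)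
    (hck : c ∉ S k) (hmk : m ≤ k) (hmt : m ≤ t) :
    c ∈ S t ↔ t < sInf {n | m < n ∧ c ∉ S n} := by
  obtain ⟨hlt, hout⟩ := Nat.sInf_mem ⟨k, mem_setOf_lt_notMem hc hck hmk⟩
  refine ⟨fun h => not_le.mp fun hle => hout (hS hlt.le hmt hle h), fun h => ?_⟩
  rcases hmt.eq_or_lt with rfl | hmt
  · exact hc
  · by_contra hct
    exact absurd (Nat.sInf_le (s := {n | m < n ∧ c ∉ S n}) ⟨hmt, hct⟩) (not_le.mpr h)

theorem injOn_sInf_mem [DecidableEq α] (h0 : S 0 = ∅)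
    (hstep : ∀ n, ∃ d, S (n + 1) ⊆ insert d (S n)) :
    Set.InjOn (fun c => sInf {t | c ∈ S t}) ↑(S k) := by
  intro c hc c' hc' h
  obtain ⟨n, hn, hcn, hcn'⟩ := exists_sInf_mem_eq_succ (by simp [h0]) hc
  obtain ⟨n', hn', hc'n, hc'n'⟩ := exists_sInf_mem_eq_succ (by simp [h0]) hc'
  obtain rfl : n = n' := by simp only at h; omega
  obtain ⟨d, hd⟩ := hstep n
  rw [(Finset.mem_insert.mp (hd hcn')).resolve_right hcn,
    (Finset.mem_insert.mp (hd hc'n')).resolve_right hc'n]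

theorem injOn_sInf_notMem [DecidableEq α]
    (hstep : ∀ n ≥ m, ∃ d, S n ⊆ insert d (S (n + 1))) (hmk : m ≤ k) :
    Set.InjOn (fun c => sInf {t | m < t ∧ c ∉ S t}) ↑(S m \ S k) := by
  intro c hc c' hc' h
  simp only [Finset.coe_sdiff, Set.mem_sdiff, Finset.mem_coe] at hc hc' h
  obtain ⟨n, hmn, hn, hcn, hcn'⟩ := exists_sInf_notMem_eq_succ hc.1 hc.2 hmk
  obtain ⟨n', -, hn', hc'n, hc'n'⟩ := exists_sInf_notMem_eq_succ hc'.1 hc'.2 hmk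
  obtain rfl : n = n' := by omega
  obtain ⟨d, hd⟩ := hstep n hmn
  rw [(Finset.mem_insert.mp (hd hcn)).resolve_right hcn',
    (Finset.mem_insert.mp (hd hc'n)).resolve_right hc'n']

end FirstTimes

namespace Finset

variable {α : Type*} [DecidableEq α] {s : Finset α} {p q : α → Prop} [DecidablePred p]
  [DecidablePred q] {c : α}

theorem filter_eq_insert_filter_of_iff (hc : c ∈ s) (hq : q c)
    (h : ∀ x ∈ s, x ≠ c → (q x ↔ p x)) : s.filter q = insert c (s.filter p) := by
  ext x
  by_cases hx : x = c
  · subst hx; simp [hc, hq]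
  · simp only [mem_filter, mem_insert, hx, false_or]
    exact and_congr_right fun hxs => h x hxs hx

theorem filter_eq_erase_filter_of_iff (hq : ¬q c) (h : ∀ x ∈ s, x ≠ c → (q x ↔ p x)) :
    s.filter q = (s.filter p).erase c := by
  ext x
  by_cases hx : x = c
  · subst hx; simp [hq]
  · simp only [mem_filter, mem_erase, hx, ne_eq, not_false_eq_true, true_and]
    exact and_congr_right fun hxs => h x hxs hx

end Finset

namespace WalledTableau

variable {r s : ℕ} {Λ : YoungDiagram × YoungDiagram} (T : WalledTableau r s Λ) {n t : ℕ}

theorem ext {T T' : WalledTableau r s Λ} (h : T.seq = T'.seq) : T = T' := by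
  cases T; cases T'; cases h; rfl

theorem left_succ (hn : n < r) : (T.seq (n + 1)).2 = (T.seq n).2 ∧
    ∃ c ∉ (T.seq n).1, (T.seq (n + 1)).1.cells = insert c (T.seq n).1.cells := by
  simpa using T.left (n + 1) (by omega) hn

theorem right_succ (hrn : r ≤ n) (hn : n < r + s) :
    ((T.seq (n + 1)).1 = (T.seq n).1 ∧
      ∃ c ∉ (T.seq n).2, (T.seq (n + 1)).2.cells = insert c (T.seq n).2.cells) ∨
    ((T.seq (n + 1)).2 = (T.seq n).2 ∧
      ∃ c ∈ (T.seq n).1, (T.seq (n + 1)).1.cells = (T.seq n).1.cells.erase c) := by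
  simpa using T.right (n + 1) (by omega) (by omega)

theorem seq_eq_of_le (ht : r + s ≤ t) : T.seq t = Λ :=
  (T.stable t ht).trans T.final

theorem seq_succ_of_le (hn : r + s ≤ n) : T.seq (n + 1) = T.seq n := by
  rw [T.seq_eq_of_le hn, T.seq_eq_of_le (by omega)]

theorem left_cells_final : (T.seq (r + s)).1.cells = Λ.1.cells := by rw [T.final]

theorem right_cells_final : (T.seq (r + s)).2.cells = Λ.2.cells := by rw [T.final]

theorem left_subset_succ (hn : n < r) : (T.seq n).1.cells ⊆ (T.seq (n + 1)).1.cells := by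
  obtain ⟨-, c, -, hc⟩ := T.left_succ hn
  exact hc ▸ Finset.subset_insert c _

theorem left_succ_subset (hn : r ≤ n) : (T.seq (n + 1)).1.cells ⊆ (T.seq n).1.cells := by
  rcases lt_or_ge n (r + s) with hs | hs
  · rcases T.right_succ hn hs with ⟨h, -⟩ | ⟨-, c, -, hc⟩
    · rw [h]
    · exact hc ▸ Finset.erase_subset c _
  · rw [T.seq_succ_of_le hs]

theorem right_subset_succ (n : ℕ) : (T.seq n).2.cells ⊆ (T.seq (n + 1)).2.cells := by
  rcases lt_or_ge n r with hr | hr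
  · rw [(T.left_succ hr).1]
  rcases lt_or_ge n (r + s) with hs | hs
  · rcases T.right_succ hr hs with ⟨-, c, -, hc⟩ | ⟨h, -⟩
    · exact hc ▸ Finset.subset_insert c _
    · rw [h]
  · rw [T.seq_succ_of_le hs]

theorem exists_left_succ_subset_insert (n : ℕ) :
    ∃ d, (T.seq (n + 1)).1.cells ⊆ insert d (T.seq n).1.cells := by
  rcases lt_or_ge n r with hr | hr
  · obtain ⟨-, c, -, hc⟩ := T.left_succ hr
    exact ⟨c, hc.le⟩
  · exact ⟨(0, 0), (T.left_succ_subset hr).trans (Finset.subset_insert _ _)⟩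

theorem exists_right_succ_subset_insert (n : ℕ) :
    ∃ d, (T.seq (n + 1)).2.cells ⊆ insert d (T.seq n).2.cells := by
  rcases lt_or_ge n r with hr | hr
  · exact ⟨(0, 0), by rw [(T.left_succ hr).1]; exact Finset.subset_insert _ _⟩
  rcases lt_or_ge n (r + s) with hs | hs
  · rcases T.right_succ hr hs with ⟨-, c, -, hc⟩ | ⟨h, -⟩
    · exact ⟨c, hc.le⟩
    · exact ⟨(0, 0), by rw [h]; exact Finset.subset_insert _ _⟩
  · exact ⟨(0, 0), by rw [T.seq_succ_of_le hs]; exact Finset.subset_insert _ _⟩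

theorem exists_left_subset_insert_succ (hn : r ≤ n) :
    ∃ d, (T.seq n).1.cells ⊆ insert d (T.seq (n + 1)).1.cells := by
  rcases lt_or_ge n (r + s) with hs | hs
  · rcases T.right_succ hn hs with ⟨h, -⟩ | ⟨-, c, hc, hcells⟩
    · exact ⟨(0, 0), by rw [h]; exact Finset.subset_insert _ _⟩
    · exact ⟨c, by rw [hcells, Finset.insert_erase hc]⟩
  · exact ⟨(0, 0), by rw [T.seq_succ_of_le hs]; exact Finset.subset_insert _ _⟩

theorem left_monotoneOn : MonotoneOn (fun t => (T.seq t).1.cells) (Set.Iic r) := by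
  intro a _ b hb hab
  induction b, hab using Nat.le_induction with
  | base => exact le_rfl
  | succ b _ ih => exact (ih (Nat.le_of_succ_le hb)).trans (T.left_subset_succ hb)

theorem left_antitoneOn : AntitoneOn (fun t => (T.seq t).1.cells) (Set.Ici r) :=
  antitoneOn_nat_Ici_of_succ_le fun _ hn => T.left_succ_subset hn

theorem right_monotone : Monotone fun t => (T.seq t).2.cells :=
  monotone_nat_of_le_succ T.right_subset_succ

theorem right_eq_bot (ht : t ≤ r) : (T.seq t).2 = ⊥ := by
  induction t with
  | zero => rw [T.init]
  | succ t ih => rw [(T.left_succ ht).1, ih (by omega)]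

theorem card_left (ht : t ≤ r) : (T.seq t).1.cells.card = t := by
  induction t with
  | zero => simp [T.init]
  | succ t ih =>
    obtain ⟨-, c, hc, hcells⟩ := T.left_succ ht
    rw [hcells, Finset.card_insert_of_notMem hc, ih (by omega)]

theorem card_sdiff_add_card_right {k : ℕ} (hk : k ≤ s) :
    ((T.seq r).1.cells \ (T.seq (r + k)).1.cells).card + (T.seq (r + k)).2.cells.card = k := by
  induction k with
  | zero => simp [T.right_eq_bot le_rfl]
  | succ k ih =>
    rw [← add_assoc]
    rcases T.right_succ (n := r + k) (by omega) (by omega) with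
      ⟨hL, c, hc, hcells⟩ | ⟨hR, c, hc, hcells⟩
    · rw [hL, hcells, Finset.card_insert_of_notMem hc, ← add_assoc, ih (by omega)]
    · have hcr : c ∈ (T.seq r).1.cells :=
        T.left_antitoneOn Set.self_mem_Ici (by simp) (by omega) hc
      rw [hR, hcells, Finset.sdiff_erase hcr, Finset.card_insert_of_notMem (by simp [hc]),
        add_right_comm, ih (by omega)]

theorem left_subset_left_wall (t : ℕ) : (T.seq t).1.cells ⊆ (T.seq r).1.cells := by
  rcases le_total t r with ht | ht
  · exact T.left_monotoneOn ht Set.self_mem_Iic ht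
  · exact T.left_antitoneOn Set.self_mem_Ici ht ht

theorem final_left_subset (ht : r ≤ t) : Λ.1.cells ⊆ (T.seq t).1.cells := by
  rcases le_total t (r + s) with hs | hs
  · simpa only [T.final] using T.left_antitoneOn ht (by simp : r ≤ r + s) hs
  · rw [T.seq_eq_of_le hs]

theorem right_subset_final (t : ℕ) : (T.seq t).2.cells ⊆ Λ.2.cells := by
  simpa only [T.seq_eq_of_le (le_max_right t (r + s))] using
    T.right_monotone (le_max_left t (r + s))

noncomputable def leftAddTime (c : ℕ × ℕ) : ℕ := sInf {t | c ∈ (T.seq t).1.cells}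

noncomputable def leftRemoveTime (c : ℕ × ℕ) : ℕ :=
  sInf {t | r < t ∧ c ∉ (T.seq t).1.cells}

noncomputable def rightAddTime (c : ℕ × ℕ) : ℕ := sInf {t | c ∈ (T.seq t).2.cells}

variable {c : ℕ × ℕ}

theorem mem_left_iff_leftAddTime_le (hc : c ∈ (T.seq r).1.cells) (ht : t ≤ r) :
    c ∈ (T.seq t).1.cells ↔ T.leftAddTime c ≤ t :=
  mem_iff_sInf_le_of_monotoneOn T.left_monotoneOn hc ht

theorem mem_left_iff_lt_leftRemoveTime (hc : c ∈ (T.seq r).1.cells \ Λ.1.cells) (ht : r ≤ t) :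
    c ∈ (T.seq t).1.cells ↔ t < T.leftRemoveTime c :=
  mem_iff_lt_sInf_of_antitoneOn T.left_antitoneOn (Finset.mem_sdiff.mp hc).1
    (T.left_cells_final ▸ (Finset.mem_sdiff.mp hc).2) (by omega) ht

theorem mem_right_iff_rightAddTime_le (hc : c ∈ Λ.2.cells) :
    c ∈ (T.seq t).2.cells ↔ T.rightAddTime c ≤ t := by
  refine mem_iff_sInf_le_of_monotoneOn (T.right_monotone.monotoneOn _) ?_ (le_max_left t (r + s))
  rwa [T.seq_eq_of_le (le_max_right t (r + s))]

theorem leftAddTime_mem (hc : c ∈ (T.seq r).1.cells) :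
    1 ≤ T.leftAddTime c ∧ T.leftAddTime c ≤ r := by
  obtain ⟨n, hn, -⟩ := exists_sInf_mem_eq_succ (S := fun t => (T.seq t).1.cells)
    (by simp [T.init]) hc
  exact ⟨by rw [leftAddTime, hn]; omega, Nat.sInf_le hc⟩

theorem leftRemoveTime_mem (hc : c ∈ (T.seq r).1.cells \ Λ.1.cells) :
    r + 1 ≤ T.leftRemoveTime c ∧ T.leftRemoveTime c ≤ r + s := by
  obtain ⟨hcr, hcΛ⟩ := Finset.mem_sdiff.mp hc
  rw [← T.left_cells_final] at hcΛ
  obtain ⟨n, hrn, hn, -⟩ :=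
    exists_sInf_notMem_eq_succ (S := fun t => (T.seq t).1.cells) hcr hcΛ (by omega)
  exact ⟨by rw [leftRemoveTime, hn]; omega,
    Nat.sInf_le (mem_setOf_lt_notMem (S := fun t => (T.seq t).1.cells) hcr hcΛ (by omega))⟩

theorem rightAddTime_mem (hc : c ∈ Λ.2.cells) :
    r + 1 ≤ T.rightAddTime c ∧ T.rightAddTime c ≤ r + s := by
  rw [← T.right_cells_final] at hc
  obtain ⟨n, hn, -, hcn⟩ := exists_sInf_mem_eq_succ (S := fun t => (T.seq t).2.cells)
    (by simp [T.init]) hc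
  refine ⟨?_, Nat.sInf_le hc⟩
  rw [rightAddTime, hn]
  by_contra! h
  simp [T.right_eq_bot (show n + 1 ≤ r by omega)] at hcn

theorem leftAddTime_eq_zero (hc : c ∉ (T.seq r).1.cells) : T.leftAddTime c = 0 :=
  Nat.sInf_eq_zero.mpr <| Or.inr <| Set.eq_empty_of_forall_notMem fun t ht =>
    hc (T.left_subset_left_wall t ht)

theorem rightAddTime_eq_zero (hc : c ∉ Λ.2.cells) : T.rightAddTime c = 0 :=
  Nat.sInf_eq_zero.mpr <| Or.inr <| Set.eq_empty_of_forall_notMem fun t ht =>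
    hc (T.right_subset_final t ht)

theorem leftAddTime_injOn : Set.InjOn T.leftAddTime ↑(T.seq r).1.cells :=
  injOn_sInf_mem (S := fun t => (T.seq t).1.cells) (by simp [T.init])
    T.exists_left_succ_subset_insert

theorem leftRemoveTime_injOn : Set.InjOn T.leftRemoveTime ↑((T.seq r).1.cells \ Λ.1.cells) := by
  rw [← T.left_cells_final]
  exact injOn_sInf_notMem (fun _ hn => T.exists_left_subset_insert_succ hn) (by omega)

theorem rightAddTime_injOn : Set.InjOn T.rightAddTime ↑Λ.2.cells := by
  rw [← T.right_cells_final]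
  exact injOn_sInf_mem (S := fun t => (T.seq t).2.cells) (by simp [T.init])
    T.exists_right_succ_subset_insert

theorem left_eq_succ_or_right_eq_succ (hn : r ≤ n) :
    (T.seq (n + 1)).1 = (T.seq n).1 ∨ (T.seq (n + 1)).2 = (T.seq n).2 := by
  rcases lt_or_ge n (r + s) with hs | hs
  · exact (T.right_succ hn hs).imp (·.1) (·.1)
  · exact Or.inl (by rw [T.seq_succ_of_le hs])

theorem leftRemoveTime_ne_rightAddTime {c' : ℕ × ℕ} (hc : c ∈ (T.seq r).1.cells \ Λ.1.cells)
    (hc' : c' ∈ Λ.2.cells) : T.leftRemoveTime c ≠ T.rightAddTime c' := by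
  obtain ⟨hcr, hcΛ⟩ := Finset.mem_sdiff.mp hc
  rw [← T.left_cells_final] at hcΛ
  rw [← T.right_cells_final] at hc'
  obtain ⟨n, hrn, hn, hcin, hcout⟩ :=
    exists_sInf_notMem_eq_succ (S := fun t => (T.seq t).1.cells) hcr hcΛ (by omega)
  obtain ⟨n', hn', hc'out, hc'in⟩ :=
    exists_sInf_mem_eq_succ (S := fun t => (T.seq t).2.cells) (by simp [T.init]) hc'
  intro h
  obtain rfl : n = n' := by rw [leftRemoveTime, rightAddTime, hn, hn'] at h; omega
  rcases T.left_eq_succ_or_right_eq_succ hrn with h | h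
  · exact hcout (by rwa [h])
  · exact hc'out (by rwa [← h])

theorem left_cells_eq_filter_of_le (ht : t ≤ r) :
    (T.seq t).1.cells = (T.seq r).1.cells.filter (fun c => T.leftAddTime c ≤ t) := by
  ext c
  rw [Finset.mem_filter]
  refine ⟨fun h => ?_, fun h => (T.mem_left_iff_leftAddTime_le h.1 ht).2 h.2⟩
  have hcr := T.left_subset_left_wall t h
  exact ⟨hcr, (T.mem_left_iff_leftAddTime_le hcr ht).1 h⟩

theorem left_cells_eq_filter_of_ge (ht : r ≤ t) :
    (T.seq t).1.cells = (T.seq r).1.cells.filter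
      (fun c => c ∈ Λ.1.cells ∨ t < T.leftRemoveTime c) := by
  ext c
  rw [Finset.mem_filter]
  by_cases hcΛ : c ∈ Λ.1.cells
  · simp only [hcΛ, true_or, and_true]
    exact ⟨fun h => T.left_subset_left_wall t h, fun _ => T.final_left_subset ht hcΛ⟩
  · simp only [hcΛ, false_or]
    refine ⟨fun h => ?_, fun h => ?_⟩
    · have hcr := T.left_subset_left_wall t h
      exact ⟨hcr,
        (T.mem_left_iff_lt_leftRemoveTime (Finset.mem_sdiff.mpr ⟨hcr, hcΛ⟩) ht).1 h⟩
    · exact (T.mem_left_iff_lt_leftRemoveTime (Finset.mem_sdiff.mpr ⟨h.1, hcΛ⟩) ht).2 h.2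

theorem right_cells_eq_filter (t : ℕ) :
    (T.seq t).2.cells = Λ.2.cells.filter (fun c => T.rightAddTime c ≤ t) := by
  ext c
  rw [Finset.mem_filter]
  refine ⟨fun h => ?_, fun h => (T.mem_right_iff_rightAddTime_le h.1).2 h.2⟩
  have hcΛ := T.right_subset_final t h
  exact ⟨hcΛ, (T.mem_right_iff_rightAddTime_le hcΛ).1 h⟩

/-- The addition times vanish off their diagrams because `sInf ∅ = 0`; the removal time of a cell
outside `λ'` is `r + 1`, so `fSk` is cut off explicitly. -/
noncomputable def toTriple : TripleTableau r s where
  lam' := (T.seq r).1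
  nu := Λ.1
  lam'' := Λ.2
  sub := YoungDiagram.cells_subset_iff.mp (T.final_left_subset le_rfl)
  cardL := T.card_left le_rfl
  cardAfter := by simpa only [T.final] using T.card_sdiff_add_card_right le_rfl
  fL := T.leftAddTime
  fSk := fun c => if c ∈ (T.seq r).1.cells \ Λ.1.cells then T.leftRemoveTime c else 0
  fR := T.rightAddTime
  fL_mem _ := T.leftAddTime_mem
  fL_inj := T.leftAddTime_injOn
  fL_junk _ := T.leftAddTime_eq_zero
  fSk_mem c hc := by simpa only [if_pos hc] using T.leftRemoveTime_mem hc
  fSk_inj := T.leftRemoveTime_injOn.congr fun c hc => (if_pos hc).symm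
  fSk_junk _ hc := if_neg hc
  fR_mem _ := T.rightAddTime_mem
  fR_inj := T.rightAddTime_injOn
  fR_junk _ := T.rightAddTime_eq_zero
  disj c hc c' hc' := by simpa only [if_pos hc] using T.leftRemoveTime_ne_rightAddTime hc hc'
  stepL t := ⟨(T.seq (min t r)).1, by
    rw [T.left_cells_eq_filter_of_le (min_le_right t r)]
    refine Finset.filter_congr fun c hc => ?_
    have := (T.leftAddTime_mem hc).2
    omega⟩
  stepSk t := ⟨(T.seq (min (max t r) (r + s))).1, by
    rw [T.left_cells_eq_filter_of_ge (by omega)]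
    refine Finset.filter_congr fun c hc => ?_
    by_cases hcΛ : c ∈ Λ.1.cells
    · simp [hcΛ]
    · have hmem : c ∈ (T.seq r).1.cells \ Λ.1.cells := Finset.mem_sdiff.mpr ⟨hc, hcΛ⟩
      have := T.leftRemoveTime_mem hmem
      simp only [hcΛ, false_or, if_pos hmem]
      omega⟩
  stepR t := ⟨(T.seq t).2, T.right_cells_eq_filter t⟩

end WalledTableau

namespace TripleTableau

variable {r s : ℕ} (W : TripleTableau r s) {n t : ℕ}

theorem ext {W W' : TripleTableau r s} (hlam' : W.lam' = W'.lam') (hnu : W.nu = W'.nu)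
    (hlam'' : W.lam'' = W'.lam'') (hL : W.fL = W'.fL) (hSk : W.fSk = W'.fSk)
    (hR : W.fR = W'.fR) : W = W' := by
  cases W; cases W'
  simp only at hlam' hnu hlam'' hL hSk hR
  subst hlam' hnu hlam'' hL hSk hR
  rfl

theorem exists_fL_eq (ht : 1 ≤ t) (htr : t ≤ r) : ∃ c ∈ W.lam'.cells, W.fL c = t :=
  Finset.surjOn_of_injOn_of_card_le W.fL (fun c hc => Finset.mem_Icc.mpr (W.fL_mem c hc))
    W.fL_inj (by simp [W.cardL]) (Finset.mem_Icc.mpr ⟨ht, htr⟩)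

theorem exists_fSk_eq_or_fR_eq (hrt : r < t) (hts : t ≤ r + s) :
    (∃ c ∈ W.lam'.cells \ W.nu.cells, W.fSk c = t) ∨ ∃ c ∈ W.lam''.cells, W.fR c = t := by
  have hinj : Set.InjOn (Sum.elim W.fSk W.fR)
      ↑((W.lam'.cells \ W.nu.cells).disjSum W.lam''.cells) := by
    rintro (c | c) hc (c' | c') hc' h <;>
      simp only [Finset.mem_coe, Finset.inl_mem_disjSum, Finset.inr_mem_disjSum,
        Sum.elim_inl, Sum.elim_inr] at hc hc' h
    · exact congrArg _ (W.fSk_inj hc hc' h)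
    · exact absurd h (W.disj c hc c' hc')
    · exact absurd h.symm (W.disj c' hc' c hc)
    · exact congrArg _ (W.fR_inj hc hc' h)
  have hmaps : Set.MapsTo (Sum.elim W.fSk W.fR)
      ↑((W.lam'.cells \ W.nu.cells).disjSum W.lam''.cells) ↑(Finset.Icc (r + 1) (r + s)) := by
    rintro (c | c) hc <;>
      simp only [Finset.mem_coe, Finset.inl_mem_disjSum, Finset.inr_mem_disjSum,
        Sum.elim_inl, Sum.elim_inr, Finset.mem_Icc] at hc ⊢
    exacts [W.fSk_mem c hc, W.fR_mem c hc]
  obtain ⟨c | c, hc, hct⟩ := Finset.surjOn_of_injOn_of_card_le _ hmaps hinj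
    (by simp [W.cardAfter]) (Finset.mem_Icc.mpr ⟨hrt, hts⟩ : t ∈ Finset.Icc (r + 1) (r + s))
  · exact Or.inl ⟨c, Finset.inl_mem_disjSum.mp hc, hct⟩
  · exact Or.inr ⟨c, Finset.inr_mem_disjSum.mp hc, hct⟩

noncomputable def path (t : ℕ) : YoungDiagram × YoungDiagram :=
  (if t ≤ r then (W.stepL t).choose else (W.stepSk t).choose, (W.stepR t).choose)

theorem filter_fL_le_eq_lam' (hrt : r ≤ t) :
    W.lam'.cells.filter (fun c => W.fL c ≤ t) = W.lam'.cells :=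
  Finset.filter_true_of_mem fun c hc => (W.fL_mem c hc).2.trans hrt

theorem filter_lt_fSk_eq_lam' (htr : t ≤ r) :
    W.lam'.cells.filter (fun c => c ∈ W.nu.cells ∨ t < W.fSk c) = W.lam'.cells := by
  refine Finset.filter_true_of_mem fun c hc => or_iff_not_imp_left.mpr fun hν => ?_
  have := (W.fSk_mem c (Finset.mem_sdiff.mpr ⟨hc, hν⟩)).1
  omega

theorem filter_lt_fSk_eq_nu (ht : r + s ≤ t) :
    W.lam'.cells.filter (fun c => c ∈ W.nu.cells ∨ t < W.fSk c) = W.nu.cells := by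
  ext c
  simp only [Finset.mem_filter]
  refine ⟨fun ⟨hc, h⟩ => ?_, fun hν => ⟨W.sub hν, Or.inl hν⟩⟩
  by_contra hν
  have := (W.fSk_mem c (Finset.mem_sdiff.mpr ⟨hc, hν⟩)).2
  exact absurd (h.resolve_left hν) (by omega)

theorem filter_fR_le_eq_lam'' (ht : r + s ≤ t) :
    W.lam''.cells.filter (fun c => W.fR c ≤ t) = W.lam''.cells :=
  Finset.filter_true_of_mem fun c hc => (W.fR_mem c hc).2.trans ht

theorem path_fst_cells_of_le (htr : t ≤ r) :
    (W.path t).1.cells = W.lam'.cells.filter (fun c => W.fL c ≤ t) := by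
  simp only [path, if_pos htr]
  exact (W.stepL t).choose_spec

theorem path_fst_cells_of_ge (hrt : r ≤ t) :
    (W.path t).1.cells = W.lam'.cells.filter (fun c => c ∈ W.nu.cells ∨ t < W.fSk c) := by
  rcases hrt.eq_or_lt with rfl | hrt
  · rw [W.path_fst_cells_of_le le_rfl, W.filter_fL_le_eq_lam' le_rfl,
      W.filter_lt_fSk_eq_lam' le_rfl]
  · simp only [path, if_neg (not_le.mpr hrt)]
    exact (W.stepSk t).choose_spec

theorem path_snd_cells (t : ℕ) :
    (W.path t).2.cells = W.lam''.cells.filter (fun c => W.fR c ≤ t) :=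
  (W.stepR t).choose_spec

theorem path_eq_of_le (ht : r + s ≤ t) : W.path t = (W.nu, W.lam'') :=
  Prod.ext (YoungDiagram.ext (by rw [W.path_fst_cells_of_ge (by omega), W.filter_lt_fSk_eq_nu ht]))
    (YoungDiagram.ext (by rw [W.path_snd_cells, W.filter_fR_le_eq_lam'' ht]))

theorem path_zero : W.path 0 = (⊥, ⊥) := by
  refine Prod.ext (YoungDiagram.ext ?_) (YoungDiagram.ext ?_)
  · rw [W.path_fst_cells_of_le (Nat.zero_le r), YoungDiagram.cells_bot]
    exact Finset.filter_false_of_mem fun c hc => by have := (W.fL_mem c hc).1; omega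
  · rw [W.path_snd_cells, YoungDiagram.cells_bot]
    exact Finset.filter_false_of_mem fun c hc => by have := (W.fR_mem c hc).1; omega

theorem path_succ_of_lt (hn : n < r) : (W.path (n + 1)).2 = (W.path n).2 ∧
    ∃ c ∉ (W.path n).1, (W.path (n + 1)).1.cells = insert c (W.path n).1.cells := by
  refine ⟨YoungDiagram.ext ?_, ?_⟩
  · rw [W.path_snd_cells, W.path_snd_cells]
    exact Finset.filter_congr fun c hc => by have := (W.fR_mem c hc).1; omega
  obtain ⟨c, hc, hfc⟩ := W.exists_fL_eq (t := n + 1) (by omega) hn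
  refine ⟨c, ?_, ?_⟩
  · change c ∉ (W.path n).1.cells
    simp [W.path_fst_cells_of_le hn.le, hfc]
  · rw [W.path_fst_cells_of_le hn, W.path_fst_cells_of_le hn.le]
    refine Finset.filter_eq_insert_filter_of_iff hc hfc.le fun x hx hxc => ?_
    have := W.fL_inj.ne hx hc hxc
    omega

theorem path_succ_of_ge (hrn : r ≤ n) (hn : n < r + s) :
    ((W.path (n + 1)).1 = (W.path n).1 ∧
      ∃ c ∉ (W.path n).2, (W.path (n + 1)).2.cells = insert c (W.path n).2.cells) ∨
    ((W.path (n + 1)).2 = (W.path n).2 ∧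
      ∃ c ∈ (W.path n).1, (W.path (n + 1)).1.cells = (W.path n).1.cells.erase c) := by
  rcases W.exists_fSk_eq_or_fR_eq (t := n + 1) (by omega) hn with
    ⟨c, hc, hfc⟩ | ⟨c, hc, hfc⟩
  · refine Or.inr ⟨YoungDiagram.ext ?_, c, ?_, ?_⟩
    · rw [W.path_snd_cells, W.path_snd_cells]
      exact Finset.filter_congr fun x hx => by have := W.disj c hc x hx; omega
    · change c ∈ (W.path n).1.cells
      rw [W.path_fst_cells_of_ge hrn]
      exact Finset.mem_filter.mpr ⟨(Finset.mem_sdiff.mp hc).1, Or.inr (by omega)⟩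
    · rw [W.path_fst_cells_of_ge (by omega), W.path_fst_cells_of_ge hrn]
      refine Finset.filter_eq_erase_filter_of_iff (by simp [(Finset.mem_sdiff.mp hc).2, hfc])
        fun x hx hxc => or_congr_right' fun hν => ?_
      have := W.fSk_inj.ne (Finset.mem_sdiff.mpr ⟨hx, hν⟩) hc hxc
      omega
  · refine Or.inl ⟨YoungDiagram.ext ?_, c, ?_, ?_⟩
    · rw [W.path_fst_cells_of_ge (by omega), W.path_fst_cells_of_ge hrn]
      refine Finset.filter_congr fun x hx => or_congr_right' fun hν => ?_
      have := W.disj x (Finset.mem_sdiff.mpr ⟨hx, hν⟩) c hc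
      omega
    · change c ∉ (W.path n).2.cells
      simp [W.path_snd_cells, hfc]
    · rw [W.path_snd_cells, W.path_snd_cells]
      refine Finset.filter_eq_insert_filter_of_iff hc hfc.le fun x hx hxc => ?_
      have := W.fR_inj.ne hx hc hxc
      omega

variable {Λ : YoungDiagram × YoungDiagram}

noncomputable def toWalled (hnu : W.nu = Λ.1) (hlam : W.lam'' = Λ.2) : WalledTableau r s Λ where
  seq := W.path
  init := W.path_zero
  final := (W.path_eq_of_le le_rfl).trans (Prod.ext hnu hlam)
  stable _ ht := by rw [W.path_eq_of_le ht, W.path_eq_of_le le_rfl]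
  left t ht htr := by
    obtain ⟨n, rfl⟩ : ∃ n, t = n + 1 := ⟨t - 1, by omega⟩
    simpa using W.path_succ_of_lt (n := n) (by omega)
  right t hrt hts := by
    obtain ⟨n, rfl⟩ : ∃ n, t = n + 1 := ⟨t - 1, by omega⟩
    simpa using W.path_succ_of_ge (n := n) (by omega) (by omega)

theorem toTriple_toWalled (hnu : W.nu = Λ.1) (hlam : W.lam'' = Λ.2) :
    (W.toWalled hnu hlam).toTriple = W := by
  set T := W.toWalled hnu hlam
  have hseq : T.seq = W.path := rfl
  have hwall : (T.seq r).1.cells = W.lam'.cells := by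
    rw [hseq, W.path_fst_cells_of_le le_rfl, W.filter_fL_le_eq_lam' le_rfl]
  refine ext (YoungDiagram.ext hwall) hnu.symm hlam.symm (funext fun c => ?_)
    (funext fun c => ?_) (funext fun c => ?_)
  · by_cases hc : c ∈ W.lam'.cells
    · refine Nat.sInf_eq_of_forall_le_iff (W.fL_mem c hc).2 fun t ht => ?_
      simp [hseq, W.path_fst_cells_of_le ht, hc]
    · rw [W.fL_junk c hc]
      exact T.leftAddTime_eq_zero (hwall ▸ hc)
  · change (if c ∈ (T.seq r).1.cells \ Λ.1.cells then T.leftRemoveTime c else 0) = W.fSk c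
    rw [hwall, ← hnu]
    by_cases hc : c ∈ W.lam'.cells \ W.nu.cells
    · rw [if_pos hc]
      obtain ⟨hcl, hcν⟩ := Finset.mem_sdiff.mp hc
      have := (W.fSk_mem c hc).1
      refine Nat.sInf_eq_of_forall_le_iff le_rfl fun t _ => ?_
      rcases le_or_gt t r with htr | hrt
      · exact ⟨fun h => absurd h.1 (by omega), fun h => absurd h (by omega)⟩
      · simp [hseq, W.path_fst_cells_of_ge hrt.le, hcl, show c ∉ W.nu from hcν, hrt]
    · rw [if_neg hc, W.fSk_junk c hc]
  · by_cases hc : c ∈ W.lam''.cells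
    · refine Nat.sInf_eq_of_forall_le_iff le_rfl fun t _ => ?_
      simp [hseq, W.path_snd_cells, hc]
    · rw [W.fR_junk c hc]
      exact T.rightAddTime_eq_zero (hlam ▸ hc)

end TripleTableau

namespace WalledTableau

variable {r s : ℕ} {Λ : YoungDiagram × YoungDiagram}

theorem toWalled_toTriple (T : WalledTableau r s Λ) : T.toTriple.toWalled rfl rfl = T := by
  refine ext (funext fun t => Prod.ext (YoungDiagram.ext ?_) (YoungDiagram.ext ?_))
  · change (T.toTriple.path t).1.cells = _
    rcases le_total t r with htr | hrt
    · exact (T.toTriple.path_fst_cells_of_le htr).trans (T.left_cells_eq_filter_of_le htr).symm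
    · rw [T.toTriple.path_fst_cells_of_ge hrt, T.left_cells_eq_filter_of_ge hrt]
      refine Finset.filter_congr fun c hc => or_congr_right' fun hcΛ => ?_
      change t < (if c ∈ (T.seq r).1.cells \ Λ.1.cells then _ else 0) ↔ _
      have hmem : c ∈ (T.seq r).1.cells \ Λ.1.cells := Finset.mem_sdiff.mpr ⟨hc, hcΛ⟩
      rw [if_pos hmem]
  · exact (T.toTriple.path_snd_cells t).trans (T.right_cells_eq_filter t).symm

noncomputable def equivTriple :
    WalledTableau r s Λ ≃ {W : TripleTableau r s // W.nu = Λ.1 ∧ W.lam'' = Λ.2} where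
  toFun T := ⟨T.toTriple, rfl, rfl⟩
  invFun W := W.1.toWalled W.2.1 W.2.2
  left_inv := toWalled_toTriple
  right_inv W := Subtype.ext (W.1.toTriple_toWalled W.2.1 W.2.2)

end WalledTableau

/-- standard walled Λ-tableaux are in bijection with standard triple
tableaux [λ'(T), ν(T), λ''(T)] with ν = Λ_L and λ'' = Λ_R, the bijection sending a
path T to the triple tableau whose first diagram is the left diagram after r steps,
whose fillings record the time at which each cell was added to the left diagram,
removed from the left diagram, or added to the right diagram, respectively. -/
theorem walled_tableaux_equiv_triple_tableaux (r s : ℕ)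
    (Λ : YoungDiagram × YoungDiagram) :
    ∃ e : WalledTableau r s Λ ≃
        {W : TripleTableau r s // W.nu = Λ.1 ∧ W.lam'' = Λ.2},
      ∀ T : WalledTableau r s Λ,
        ((e T : TripleTableau r s).lam' = (T.seq r).1) ∧
        (∀ c ∈ (T.seq r).1.cells,
          (e T : TripleTableau r s).fL c = sInf {t : ℕ | c ∈ (T.seq t).1}) ∧
        (∀ c ∈ (T.seq r).1.cells \ Λ.1.cells,
          (e T : TripleTableau r s).fSk c = sInf {t : ℕ | r < t ∧ c ∉ (T.seq t).1}) ∧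
        (∀ c ∈ Λ.2.cells,
          (e T : TripleTableau r s).fR c = sInf {t : ℕ | c ∈ (T.seq t).2}) :=
  ⟨WalledTableau.equivTriple, fun _ =>
    ⟨rfl, fun _ _ => rfl, fun _ hc => if_pos hc, fun _ _ => rfl⟩⟩
end
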